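/- Let T(k; B) be the total latency and suppose the optimal split k*(B) = argmin over {k : m(k) ≤ M} of T(k; B) is unique for all B in a range. If B ≤ B', and U is strictly increasing, then k*(B) ≤ k*(B'): the optimal number of edge layers is monotone nondecreasing in the bandwidth. -/

import Mathlib

/-!
Raising the bandwidth lowers the communication cost `U k / B` of every split by an amount that
grows with `k`, since `U` is monotone. So the latency has decreasing differences in `(k, B)`:
if `k' < k`, the advantage of `k` over `k'` only improves as `B` grows. Were the optimum at `B'`
strictly below the optimum at `B`, adding the two strict optimality inequalities would contradict
this.
-/

theorem le_of_strict_minimizers_of_sub_le_sub {ι : Type*} [LinearOrder ι] {s : Set ι}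
    {f g : ι → ℝ} {k k' : ι} (hk : k ∈ s) (hk' : k' ∈ s)
    (hf : ∀ j ∈ s, j ≠ k → f k < f j) (hg : ∀ j ∈ s, j ≠ k' → g k' < g j)
    (hfg : ∀ j ∈ s, ∀ j' ∈ s, j' < j → g j - g j' ≤ f j - f j') :
    k ≤ k' := by
  by_contra! hlt
  have hf' : f k < f k' := hf k' hk' hlt.ne
  have hg' : g k' < g k := hg k hk hlt.ne'
  linarith [hfg k hk k' hk' hlt]

theorem add_div_sub_add_div_le_sub {ι : Type*} [Preorder ι] {C U : ι → ℝ} (hU : Monotone U)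
    {b b' : ℝ} (hb : 0 < b) (hbb' : b ≤ b') {j j' : ι} (hj : j' ≤ j) :
    (C j + U j / b') - (C j' + U j' / b') ≤ (C j + U j / b) - (C j' + U j' / b) := by
  have hdiff : (U j - U j') / b' ≤ (U j - U j') / b :=
    div_le_div_of_nonneg_left (sub_nonneg.mpr (hU hj)) hb hbb'
  linarith [sub_div (U j) (U j') b, sub_div (U j) (U j') b']

theorem optimal_split_monotone_in_bandwidth_general
    (L : ℕ) (A U S m : ℕ → ℝ) (M ce se cs ss B B' : ℝ)
    (hB : 0 < B) (hBB' : B ≤ B')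
    (hU : StrictMono U)
    (T : ℕ → ℝ → ℝ)
    (hT : ∀ k b, T k b = A k / (ce * se) + U k / b + S (L - k) / (cs * ss))
    (kB kB' : ℕ)
    (hkB : kB ≤ L ∧ m kB ≤ M) (hkB' : kB' ≤ L ∧ m kB' ≤ M)
    (hoptB : ∀ k, k ≤ L → m k ≤ M → k ≠ kB → T kB B < T k B)
    (hoptB' : ∀ k, k ≤ L → m k ≤ M → k ≠ kB' → T kB' B' < T k B') :
    kB ≤ kB' := by
  set C : ℕ → ℝ := fun k => A k / (ce * se) + S (L - k) / (cs * ss)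
  have hTC : ∀ k b, T k b = C k + U k / b := fun k b => by rw [hT]; ring
  refine le_of_strict_minimizers_of_sub_le_sub (s := {k | k ≤ L ∧ m k ≤ M})
    (f := (T · B)) (g := (T · B')) hkB hkB'
    (fun k hk => hoptB k hk.1 hk.2) (fun k hk => hoptB' k hk.1 hk.2) ?_
  intro j _ j' _ hj
  simp only [hTC]
  exact add_div_sub_add_div_le_sub hU.monotone hB hBB' hj.le

/-- Monotone comparative statics: if `U` is strictly increasing and the
optimal split is unique at bandwidths `B ≤ B'`, then the optimal number of
edge layers is nondecreasing in the bandwidth. -/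
theorem optimal_split_monotone_in_bandwidth
    (L : ℕ) (A U S m : ℕ → ℝ) (M ce se cs ss B B' : ℝ)
    (hce : 0 < ce) (hse : 0 < se) (hcs : 0 < cs) (hss : 0 < ss)
    (hB : 0 < B) (hBB' : B ≤ B')
    (hA : Monotone A) (hS : Monotone S) (hU : StrictMono U)
    (T : ℕ → ℝ → ℝ)
    (hT : ∀ k b, T k b = A k / (ce * se) + U k / b + S (L - k) / (cs * ss))
    (kB kB' : ℕ)
    (hkB : kB ≤ L ∧ m kB ≤ M) (hkB' : kB' ≤ L ∧ m kB' ≤ M)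
    (hoptB : ∀ k, k ≤ L → m k ≤ M → k ≠ kB → T kB B < T k B)
    (hoptB' : ∀ k, k ≤ L → m k ≤ M → k ≠ kB' → T kB' B' < T k B') :
    kB ≤ kB' :=
  optimal_split_monotone_in_bandwidth_general L A U S m M ce se cs ss B B' hB hBB' hU T hT kB kB'
    hkB hkB' hoptB hoptB'
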